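/- If X ∈ H is lower bounded and independent of F_n (i.e., E(φ(I_A, X)) = E(ψ(I_A)) with ψ(x) = E(φ(x,X)) for all A ∈ F_n and admissible φ; equivalently E(I_A X) = E(I_A E(X)) for all A ∈ F_n after shifting X to be nonnegative), then E_n(X) = E(X) quasi-surely. -/

import Mathlib

open MeasureTheory Filter Set

/-- An `F_t`-consistent sublinear expectation (`SL`-expectation) in discrete time:
a filtration `F t` of sub-σ-algebras, a space `H` of measurable real functions closed
under constants, `|·|`, addition, scalar multiplication and multiplication by indicators,
and conditional expectations `Et t : H → H ∩ mF_t` satisfying monotonicity, the tower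
property, locality, projection, sub-additivity, positive homogeneity and the monotone
continuity (Fatou) property.  `E := Et 0` is identified with a real-valued functional. -/
structure CondSLExp (Ω : Type*) [m : MeasurableSpace Ω] where
  F : ℕ → MeasurableSpace Ω
  F_le : ∀ t, F t ≤ m
  F_mono : Monotone F
  H : Set (Ω → ℝ)
  H_meas : ∀ X ∈ H, Measurable X
  const_mem : ∀ c : ℝ, (fun _ => c) ∈ H
  abs_mem : ∀ X ∈ H, (fun ω => |X ω|) ∈ H
  add_mem : ∀ X ∈ H, ∀ Y ∈ H, X + Y ∈ H
  smul_mem : ∀ (c : ℝ), ∀ X ∈ H, c • X ∈ H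
  indmul_mem : ∀ (A : Set Ω), MeasurableSet A → ∀ X ∈ H, A.indicator X ∈ H
  Et : ℕ → (Ω → ℝ) → (Ω → ℝ)
  E : (Ω → ℝ) → ℝ
  E0_eq : ∀ X ∈ H, ∀ ω, Et 0 X ω = E X
  Et_mem : ∀ t, ∀ X ∈ H, Et t X ∈ H
  Et_meas : ∀ t, ∀ X ∈ H, Measurable[F t] (Et t X)
  mono : ∀ t, ∀ X ∈ H, ∀ Y ∈ H, (∀ ω, X ω ≤ Y ω) → ∀ ω, Et t X ω ≤ Et t Y ω
  tower : ∀ s t : ℕ, s ≤ t → ∀ Y ∈ H, Et s (Et t Y) = Et s Y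
  locality : ∀ (t : ℕ) (A : Set Ω), MeasurableSet[F t] A → ∀ Y ∈ H,
      Et t (A.indicator Y) = A.indicator (Et t Y)
  proj : ∀ t, ∀ Y ∈ H, Measurable[F t] Y → Et t Y = Y
  subadd : ∀ t, ∀ X ∈ H, ∀ Y ∈ H, ∀ ω, Et t (X + Y) ω ≤ Et t X ω + Et t Y ω
  poshom : ∀ (t : ℕ) (lam : Ω → ℝ), lam ∈ H → Measurable[F t] lam → ∀ Y ∈ H,
      (fun ω => lam ω * Y ω) ∈ H →
      ∀ ω, Et t (fun ω' => lam ω' * Y ω') ω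
        = max (lam ω) 0 * Et t Y ω + max (-(lam ω)) 0 * Et t (fun ω' => -(Y ω')) ω
  fatou : ∀ X : ℕ → Ω → ℝ, (∀ i, X i ∈ H) → (∀ ω, Antitone fun i => X i ω) →
      (∀ ω, Tendsto (fun i => X i ω) atTop (nhds 0)) →
      Tendsto (fun i => E (X i)) atTop (nhds 0)

variable {Ω : Type*} [MeasurableSpace Ω]

/-- The upper capacity `V(A) := E(I_A)`. -/
noncomputable def CondSLExp.V (S : CondSLExp Ω) (A : Set Ω) : ℝ :=
  S.E (A.indicator fun _ => (1 : ℝ))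

/-- A property holds quasi-surely if it holds outside a set `N` with `E(I_N) = 0`. -/
def CondSLExp.QS (S : CondSLExp Ω) (P : Ω → Prop) : Prop :=
  ∃ N : Set Ω, S.V N = 0 ∧ ∀ ω ∉ N, P ω

/-- `X` is independent of `F n`: `X` is independent of `I_A` under `E` for every
`A ∈ F n`, i.e. `E(φ(I_A, X)) = E(φ̄(I_A))` where `φ̄(x) := E(φ(x, X))`. -/
def CondSLExp.IndepOf (S : CondSLExp Ω) (X : Ω → ℝ) (n : ℕ) : Prop :=
  ∀ A : Set Ω, MeasurableSet[S.F n] A → ∀ φ : ℝ → ℝ → ℝ,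
    (fun ω => φ (A.indicator (fun _ => (1 : ℝ)) ω) (X ω)) ∈ S.H →
    (∀ x : ℝ, (fun ω => φ x (X ω)) ∈ S.H) →
    (fun ω => S.E fun ω' => φ (A.indicator (fun _ => (1 : ℝ)) ω) (X ω')) ∈ S.H →
    S.E (fun ω => φ (A.indicator (fun _ => (1 : ℝ)) ω) (X ω)) =
      S.E (fun ω => S.E fun ω' => φ (A.indicator (fun _ => (1 : ℝ)) ω) (X ω'))

/-- Membership in `L_b¹`, via the characterization
`L_b¹ = {X ∈ L¹ : lim_n E(|X| I_{|X|>n}) = 0}`. -/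
def CondSLExp.InLb1 (S : CondSLExp Ω) (X : Ω → ℝ) : Prop :=
  Tendsto (fun n : ℕ => S.E fun ω => if (n : ℝ) < |X ω| then |X ω| else 0)
    atTop (nhds 0)

/-! Shifting by the lower bound, we may assume `X ≥ 0`. Independence, tested with
`φ(x, y) = x y`, gives `E(I_A X) = E(X) V(A)` for `A ∈ F_n`, and by the tower property and
locality the left side is `E(I_A E_n X)`. Testing this on the `F_n`-sets
`{E_n X ≥ E X + ε}` and `{E_n X ≤ E X - ε}` shows that both have capacity zero, and
monotone continuity of `E` lets `ε ↓ 0`. -/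

namespace CondSLExp

variable (S : CondSLExp Ω)

lemma sub_const_mem {X : Ω → ℝ} (hX : X ∈ S.H) (c : ℝ) : (fun ω => X ω - c) ∈ S.H := by
  have h : (fun ω => X ω - c) = X + fun _ => -c := by funext; simp [sub_eq_add_neg]
  exact h ▸ S.add_mem X hX _ (S.const_mem (-c))

lemma indicator_one_mem {A : Set Ω} (hA : MeasurableSet A) :
    A.indicator (fun _ => (1 : ℝ)) ∈ S.H :=
  S.indmul_mem A hA _ (S.const_mem 1)

lemma Et_const (t : ℕ) (a : ℝ) : S.Et t (fun _ => a) = fun _ => a :=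
  S.proj t _ (S.const_mem a) measurable_const

lemma Et_sub_const (t : ℕ) {X : Ω → ℝ} (hX : X ∈ S.H) (c : ℝ) :
    S.Et t (fun ω => X ω - c) = fun ω => S.Et t X ω - c := by
  funext ω
  have h₁ := S.subadd t X hX _ (S.const_mem (-c)) ω
  have h₂ := S.subadd t _ (S.sub_const_mem hX c) _ (S.const_mem c) ω
  have e₁ : X + (fun _ => -c) = fun ω => X ω - c := by funext; simp [sub_eq_add_neg]
  have e₂ : (fun ω => X ω - c) + (fun _ => c) = X := by funext; simp
  rw [Et_const, e₁] at h₁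
  rw [Et_const, e₂] at h₂
  linarith

lemma Et_nonneg (t : ℕ) {X : Ω → ℝ} (hX : X ∈ S.H) (hX₀ : ∀ ω, 0 ≤ X ω) (ω : Ω) :
    0 ≤ S.Et t X ω := by
  simpa [Et_const] using S.mono t _ (S.const_mem 0) X hX hX₀ ω

lemma E_zero : S.E (fun _ => (0 : ℝ)) = 0 :=
  tendsto_nhds_unique tendsto_const_nhds <|
    S.fatou (fun _ _ => 0) (fun _ => S.const_mem 0) (fun _ _ _ _ => le_rfl)
      (fun _ => tendsto_const_nhds)

lemma V_empty : S.V ∅ = 0 := by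
  simp [V, E_zero]

section Nonempty

variable [Nonempty Ω]

lemma E_eq_Et_zero {X : Ω → ℝ} (hX : X ∈ S.H) : S.E X = S.Et 0 X (Classical.arbitrary Ω) :=
  (S.E0_eq X hX _).symm

lemma E_mono {X Y : Ω → ℝ} (hX : X ∈ S.H) (hY : Y ∈ S.H) (h : ∀ ω, X ω ≤ Y ω) :
    S.E X ≤ S.E Y := by
  rw [E_eq_Et_zero S hX, E_eq_Et_zero S hY]
  exact S.mono 0 X hX Y hY h _

lemma E_nonneg {X : Ω → ℝ} (hX : X ∈ S.H) (hX₀ : ∀ ω, 0 ≤ X ω) : 0 ≤ S.E X := by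
  rw [E_eq_Et_zero S hX]
  exact S.Et_nonneg 0 hX hX₀ _

lemma E_add_le {X Y : Ω → ℝ} (hX : X ∈ S.H) (hY : Y ∈ S.H) :
    S.E (X + Y) ≤ S.E X + S.E Y := by
  rw [E_eq_Et_zero S hX, E_eq_Et_zero S hY, E_eq_Et_zero S (S.add_mem X hX Y hY)]
  exact S.subadd 0 X hX Y hY _

lemma E_const_mul {X : Ω → ℝ} (hX : X ∈ S.H) {k : ℝ} (hk : 0 ≤ k) :
    S.E (fun ω => k * X ω) = k * S.E X := by
  have hkX : (fun ω => k * X ω) ∈ S.H := S.smul_mem k X hX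
  have h := S.poshom 0 (fun _ => k) (S.const_mem k) measurable_const X hX hkX
    (Classical.arbitrary Ω)
  rw [max_eq_left hk, max_eq_right (neg_nonpos.mpr hk), zero_mul, add_zero] at h
  rwa [E_eq_Et_zero S hkX, E_eq_Et_zero S hX]

lemma E_sub_const {X : Ω → ℝ} (hX : X ∈ S.H) (c : ℝ) :
    S.E (fun ω => X ω - c) = S.E X - c := by
  rw [E_eq_Et_zero S (S.sub_const_mem hX c), Et_sub_const S 0 hX, E_eq_Et_zero S hX]

lemma E_Et (t : ℕ) {X : Ω → ℝ} (hX : X ∈ S.H) : S.E (S.Et t X) = S.E X := by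
  rw [E_eq_Et_zero S (S.Et_mem t X hX), S.tower 0 t t.zero_le X hX, E_eq_Et_zero S hX]

lemma E_indicator_Et {t : ℕ} {A : Set Ω} (hA : MeasurableSet[S.F t] A) {X : Ω → ℝ}
    (hX : X ∈ S.H) : S.E (A.indicator (S.Et t X)) = S.E (A.indicator X) := by
  rw [← S.locality t A hA X hX, E_Et S t (S.indmul_mem A (S.F_le t A hA) X hX)]

lemma V_nonneg {A : Set Ω} (hA : MeasurableSet A) : 0 ≤ S.V A :=
  S.E_nonneg (S.indicator_one_mem hA) (Set.indicator_nonneg fun _ _ => zero_le_one)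

lemma V_mono {A B : Set Ω} (hA : MeasurableSet A) (hB : MeasurableSet B) (hAB : A ⊆ B) :
    S.V A ≤ S.V B :=
  S.E_mono (S.indicator_one_mem hA) (S.indicator_one_mem hB) fun _ =>
    Set.indicator_le_indicator_of_subset hAB (fun _ => zero_le_one) _

lemma V_union_le {A B : Set Ω} (hA : MeasurableSet A) (hB : MeasurableSet B) :
    S.V (A ∪ B) ≤ S.V A + S.V B := by
  refine le_trans (S.E_mono (S.indicator_one_mem (hA.union hB))
    (S.add_mem _ (S.indicator_one_mem hA) _ (S.indicator_one_mem hB)) fun ω => ?_)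
    (S.E_add_le (S.indicator_one_mem hA) (S.indicator_one_mem hB))
  by_cases ha : ω ∈ A <;> by_cases hb : ω ∈ B <;> simp [ha, hb]

lemma E_indicator_const {A : Set Ω} (hA : MeasurableSet A) {k : ℝ} (hk : 0 ≤ k) :
    S.E (A.indicator fun _ => k) = k * S.V A := by
  have h : A.indicator (fun _ => k) = fun ω => k * A.indicator (fun _ => (1 : ℝ)) ω := by
    funext ω
    by_cases hω : ω ∈ A <;> simp [hω]
  rw [h, S.E_const_mul (S.indicator_one_mem hA) hk, V]

lemma V_iUnion_eq_zero {C : ℕ → Set Ω} (hC : ∀ k, MeasurableSet (C k)) (hmono : Monotone C)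
    (h : ∀ k, S.V (C k) = 0) : S.V (⋃ k, C k) = 0 := by
  set N := ⋃ k, C k
  have hN : MeasurableSet N := MeasurableSet.iUnion hC
  have hrest : Tendsto (fun k => S.V (N \ C k)) atTop (nhds 0) := by
    refine S.fatou _ (fun k => S.indicator_one_mem (hN.diff (hC k)))
      (fun ω i j hij => Set.indicator_le_indicator_of_subset
        (sdiff_subset_sdiff_right (hmono hij)) (fun _ => zero_le_one) ω) fun ω => ?_
    have hev : ∀ᶠ k in atTop, ω ∉ N \ C k := by
      by_cases hω : ω ∈ N
      · obtain ⟨k₀, hk₀⟩ := mem_iUnion.1 hω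
        filter_upwards [eventually_ge_atTop k₀] with k hk hωk using hωk.2 (hmono hk hk₀)
      · exact Eventually.of_forall fun k hωk => hω hωk.1
    exact tendsto_const_nhds.congr' <| by
      filter_upwards [hev] with k hk using (Set.indicator_of_notMem hk _).symm
  have hle : ∀ k, S.V N ≤ S.V (N \ C k) := fun k =>
    calc S.V N ≤ S.V (N \ C k ∪ C k) :=
          S.V_mono hN ((hN.diff (hC k)).union (hC k)) (by simp)
      _ ≤ S.V (N \ C k) + S.V (C k) := S.V_union_le (hN.diff (hC k)) (hC k)
      _ = S.V (N \ C k) := by rw [h k, add_zero]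
  exact le_antisymm (ge_of_tendsto' hrest hle) (S.V_nonneg hN)

lemma V_setOf_pos_eq_zero {f : Ω → ℝ} (hf : Measurable f)
    (h : ∀ ε > 0, S.V {ω | ε ≤ f ω} = 0) : S.V {ω | 0 < f ω} = 0 := by
  have hset : {ω | 0 < f ω} = ⋃ k : ℕ, {ω | 1 / ((k : ℝ) + 1) ≤ f ω} := by
    ext ω
    simp only [mem_ofPred_eq, mem_iUnion]
    constructor
    · intro hpos
      obtain ⟨k, hk⟩ := exists_nat_one_div_lt hpos
      exact ⟨k, hk.le⟩
    · rintro ⟨k, hk⟩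
      exact lt_of_lt_of_le (by positivity) hk
  rw [hset]
  exact S.V_iUnion_eq_zero (fun _ => measurableSet_le measurable_const hf)
    (fun i j hij ω hω => show 1 / ((j : ℝ) + 1) ≤ f ω from (Nat.one_div_le_one_div hij).trans hω)
    fun _ => h _ (by positivity)

variable {n : ℕ} {W : Ω → ℝ} {m : ℝ}

lemma V_setOf_add_le_eq_zero (hW : W ∈ S.H) (hWm : Measurable[S.F n] W) (hm : 0 ≤ m)
    (h : ∀ A, MeasurableSet[S.F n] A → S.E (A.indicator W) = m * S.V A) {ε : ℝ} (hε : 0 < ε) :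
    S.V {ω | m + ε ≤ W ω} = 0 := by
  set U := {ω | m + ε ≤ W ω}
  have hUn : MeasurableSet[S.F n] U := measurableSet_le measurable_const hWm
  have hU : MeasurableSet U := S.F_le n U hUn
  have hle : (m + ε) * S.V U ≤ m * S.V U := by
    rw [← S.E_indicator_const hU (by linarith), ← h U hUn]
    exact S.E_mono (S.indmul_mem U hU _ (S.const_mem _)) (S.indmul_mem U hU W hW) fun _ =>
      Set.indicator_le_indicator' id
  nlinarith [S.V_nonneg hU]

lemma V_setOf_le_sub_eq_zero (hW : W ∈ S.H) (hWm : Measurable[S.F n] W) (hW₀ : ∀ ω, 0 ≤ W ω)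
    (h : ∀ A, MeasurableSet[S.F n] A → S.E (A.indicator W) = m * S.V A) {ε : ℝ} (hε : 0 < ε) :
    S.V {ω | W ω ≤ m - ε} = 0 := by
  set L := {ω | W ω ≤ m - ε}
  rcases lt_or_ge (m - ε) 0 with hneg | hpos
  · have hL : L = ∅ := eq_empty_of_forall_notMem fun ω (hω : W ω ≤ m - ε) => by
      linarith [hW₀ ω]
    rw [hL, V_empty]
  have hLn : MeasurableSet[S.F n] L := measurableSet_le hWm measurable_const
  have hL : MeasurableSet L := S.F_le n L hLn
  have hle : m * S.V L ≤ (m - ε) * S.V L := by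
    rw [← S.E_indicator_const hL hpos, ← h L hLn]
    exact S.E_mono (S.indmul_mem L hL W hW) (S.indmul_mem L hL _ (S.const_mem _)) fun _ =>
      Set.indicator_le_indicator' id
  nlinarith [S.V_nonneg hL]

lemma qs_eq_of_E_indicator_eq_mul_V (hW : W ∈ S.H) (hWm : Measurable[S.F n] W)
    (hW₀ : ∀ ω, 0 ≤ W ω) (hm : 0 ≤ m)
    (h : ∀ A, MeasurableSet[S.F n] A → S.E (A.indicator W) = m * S.V A) :
    S.QS fun ω => W ω = m := by
  have hmeas : Measurable fun ω => |W ω - m| := ((S.H_meas W hW).sub_const m).abs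
  refine ⟨{ω | 0 < |W ω - m|}, S.V_setOf_pos_eq_zero hmeas fun ε hε => ?_, fun ω hω => ?_⟩
  · have hU : MeasurableSet {ω | m + ε ≤ W ω} := measurableSet_le measurable_const (S.H_meas W hW)
    have hL : MeasurableSet {ω | W ω ≤ m - ε} := measurableSet_le (S.H_meas W hW) measurable_const
    have hsub : {ω | ε ≤ |W ω - m|} ⊆ {ω | m + ε ≤ W ω} ∪ {ω | W ω ≤ m - ε} :=
      fun ω (hω : ε ≤ |W ω - m|) => by
        rcases le_abs'.1 hω with hω | hω
        · exact Or.inr (show W ω ≤ m - ε by linarith)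
        · exact Or.inl (show m + ε ≤ W ω by linarith)
    refine le_antisymm ?_ (S.V_nonneg (measurableSet_le measurable_const hmeas))
    calc S.V {ω | ε ≤ |W ω - m|}
        ≤ S.V ({ω | m + ε ≤ W ω} ∪ {ω | W ω ≤ m - ε}) :=
          S.V_mono (measurableSet_le measurable_const hmeas) (hU.union hL) hsub
      _ ≤ S.V {ω | m + ε ≤ W ω} + S.V {ω | W ω ≤ m - ε} := S.V_union_le hU hL
      _ = 0 := by
          rw [S.V_setOf_add_le_eq_zero hW hWm hm h hε, S.V_setOf_le_sub_eq_zero hW hWm hW₀ h hε,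
            add_zero]
  · simpa [sub_eq_zero] using hω

end Nonempty

variable {S}

lemma IndepOf.sub_const {X : Ω → ℝ} {n : ℕ} (hind : S.IndepOf X n) (c : ℝ) :
    S.IndepOf (fun ω => X ω - c) n :=
  fun A hA φ => hind A hA fun x y => φ x (y - c)

variable [Nonempty Ω]

lemma IndepOf.E_indicator {X : Ω → ℝ} {n : ℕ} (hind : S.IndepOf X n) (hX : X ∈ S.H)
    (hEX : 0 ≤ S.E X) {A : Set Ω} (hA : MeasurableSet[S.F n] A) :
    S.E (A.indicator X) = S.E X * S.V A := by
  have hA' : MeasurableSet A := S.F_le n A hA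
  have hprod : (fun ω => A.indicator (fun _ => (1 : ℝ)) ω * X ω) = A.indicator X := by
    funext ω
    by_cases hω : ω ∈ A <;> simp [hω]
  have hconst : (fun ω => S.E fun ω' => A.indicator (fun _ => (1 : ℝ)) ω * X ω')
      = A.indicator fun _ => S.E X := by
    funext ω
    by_cases hω : ω ∈ A <;> simp [hω, E_zero]
  have h := hind A hA (fun x y => x * y) (hprod ▸ S.indmul_mem A hA' X hX)
    (fun x => S.smul_mem x X hX) (hconst ▸ S.indmul_mem A hA' _ (S.const_mem _))
  simp only [hprod, hconst] at h
  rw [h, S.E_indicator_const hA' hEX]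

lemma IndepOf.qs_Et_eq_E_of_nonneg {X : Ω → ℝ} {n : ℕ} (hind : S.IndepOf X n)
    (hX : X ∈ S.H) (hX₀ : ∀ ω, 0 ≤ X ω) : S.QS fun ω => S.Et n X ω = S.E X :=
  S.qs_eq_of_E_indicator_eq_mul_V (S.Et_mem n X hX) (S.Et_meas n X hX) (S.Et_nonneg n hX hX₀)
    (S.E_nonneg hX hX₀) fun _ hA => by
      rw [S.E_indicator_Et hA hX, hind.E_indicator hX (S.E_nonneg hX hX₀) hA]

end CondSLExp

/-- if `X ∈ H` is lower bounded and independent of `F_n`, then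
`E_n(X) = E(X)` quasi-surely. -/
theorem condExp_eq_of_indep_lowerBdd (S : CondSLExp Ω) (n : ℕ) (X : Ω → ℝ)
    (hX : X ∈ S.H) (hlb : ∃ c : ℝ, ∀ ω, c ≤ X ω)
    (hind : S.IndepOf X n) :
    S.QS fun ω => S.Et n X ω = S.E X := by
  rcases isEmpty_or_nonempty Ω with hΩ | hΩ
  · exact ⟨∅, S.V_empty, fun ω => isEmptyElim ω⟩
  obtain ⟨c, hc⟩ := hlb
  obtain ⟨N, hN, hshift⟩ := (hind.sub_const c).qs_Et_eq_E_of_nonneg (S.sub_const_mem hX c)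
    fun ω => sub_nonneg.2 (hc ω)
  refine ⟨N, hN, fun ω hω => ?_⟩
  have h := hshift ω hω
  rw [S.Et_sub_const n hX c, S.E_sub_const hX c] at h
  linarith
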